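/- arXiv:2411.17512 — 2 statements merged into one kernel-verified Lean document; each statement's English description precedes it below -/
import Mathlib

section
/- Let b ∈ ℝ, σ > 0, m ∈ (0,1], α ∈ ℝ, T > 0, δ ≥ 0. Let v, ṽ : [b−σ, b+σ] × [0,T] → ℝ both satisfy the transversality slope condition: v(x₂,t) − v(x₁,t) ≥ (m/4)(x₂ − x₁) for all b−σ ≤ x₁ ≤ x₂ ≤ b+σ and all t ∈ [0,T] (and the same for ṽ), and suppose |v(x,t) − ṽ(x,t)| ≤ δ for all (x,t) in the strip. If a, ã : [0,T] → [b−σ, b+σ] satisfy v(a(t), t) = α and ṽ(ã(t), t) = α for all t ∈ [0,T], then sup_{t∈[0,T]} |a(t) − ã(t)| ≤ (4/m)·δ. -/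
/-- Stability of the level curve with respect to uniform
perturbations of the function: if `|v - v'| ≤ δ` on the strip and both satisfy
the transversality slope condition, then the corresponding level curves differ
by at most `(4/m) δ`. -/
theorem level_curve_stability
    (b σ m α T δ : ℝ) (hσ : 0 < σ) (hm0 : 0 < m) (hm1 : m ≤ 1) (hT : 0 < T)
    (hδ : 0 ≤ δ)
    (v v' : ℝ → ℝ → ℝ)
    (htrans : ∀ x₁ x₂ t, b - σ ≤ x₁ → x₁ ≤ x₂ → x₂ ≤ b + σ → t ∈ Set.Icc (0:ℝ) T →
      m / 4 * (x₂ - x₁) ≤ v x₂ t - v x₁ t)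
    (htrans' : ∀ x₁ x₂ t, b - σ ≤ x₁ → x₁ ≤ x₂ → x₂ ≤ b + σ → t ∈ Set.Icc (0:ℝ) T →
      m / 4 * (x₂ - x₁) ≤ v' x₂ t - v' x₁ t)
    (hclose : ∀ x ∈ Set.Icc (b - σ) (b + σ), ∀ t ∈ Set.Icc (0:ℝ) T,
      |v x t - v' x t| ≤ δ)
    (a a' : ℝ → ℝ)
    (ha_mem : ∀ t ∈ Set.Icc (0:ℝ) T, a t ∈ Set.Icc (b - σ) (b + σ))
    (ha'_mem : ∀ t ∈ Set.Icc (0:ℝ) T, a' t ∈ Set.Icc (b - σ) (b + σ))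
    (ha : ∀ t ∈ Set.Icc (0:ℝ) T, v (a t) t = α)
    (ha' : ∀ t ∈ Set.Icc (0:ℝ) T, v' (a' t) t = α) :
    ∀ t ∈ Set.Icc (0:ℝ) T, |a t - a' t| ≤ 4 / m * δ := by
  intro t ht
  obtain ⟨ha1, ha2⟩ := ha_mem t ht
  obtain ⟨ha'1, ha'2⟩ := ha'_mem t ht
  have hva := ha t ht
  have hva' := ha' t ht
  rw [abs_le]
  constructor
  · -- show -(4/m*δ) ≤ a t - a' t, i.e. a' t - a t ≤ 4/m*δ
    rcases le_or_gt (a t) (a' t) with h | h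
    · have key := htrans (a t) (a' t) t ha1 h ha'2 ht
      have hcl := hclose (a' t) ⟨ha'1, ha'2⟩ t ht
      have hub : v (a' t) t - v' (a' t) t ≤ δ := (abs_le.mp hcl).2
      have h4 : m * (4 / m * δ) = 4 * δ := by field_simp
      nlinarith [key, hub, hva, hva', h4]
    · nlinarith [mul_nonneg (le_of_lt (div_pos (by norm_num : (0:ℝ) < 4) hm0)) hδ]
  · rcases le_or_gt (a' t) (a t) with h | h
    · have key := htrans' (a' t) (a t) t ha'1 h ha2 ht
      have hcl := hclose (a t) ⟨ha1, ha2⟩ t ht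
      have hlb : -δ ≤ v (a t) t - v' (a t) t := (abs_le.mp hcl).1
      have h4 : m * (4 / m * δ) = 4 * δ := by field_simp
      nlinarith [key, hlb, hva, hva', h4]
    · nlinarith [mul_nonneg (le_of_lt (div_pos (by norm_num : (0:ℝ) < 4) hm0)) hδ]
end

section
/- Let m ∈ (0,1], N₂ > 0, α ∈ ℝ, T > 0, b ∈ ℝ, σ > 0, and let u : [b−σ, b+σ] × [0,T] → ℝ satisfy: (i) the one-sided temporal bound u(x,t′) − u(x,t″) ≤ N₂(t″ − t′) for all x ∈ [b−σ, b+σ] and all 0 ≤ t′ ≤ t″ ≤ T; and (ii) the transversality slope condition u(x₂,t) − u(x₁,t) ≥ (m/4)(x₂ − x₁) for all b−σ ≤ x₁ ≤ x₂ ≤ b+σ and all t ∈ [0,T]. Then for any t* ≤ t** in [0,T] and any s₁ ≤ s₂ in [b−σ, b+σ] with u(s₁, t*) = α and u(s₂, t**) = α, one has 0 ≤ s₂ − s₁ ≤ (4N₂/m)(t** − t*). -/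
/-- the two-point estimate behind the Lipschitz regularity of
the free boundary: a one-sided temporal bound and the transversality slope
condition yield `0 ≤ s₂ − s₁ ≤ (4 N₂ / m)(t** − t*)` for two interface points
on the level set `{u = α}`. -/
theorem free_boundary_lipschitz_two_point
    (m N₂ α T b σ : ℝ) (hm0 : 0 < m) (hm1 : m ≤ 1) (hN₂ : 0 < N₂)
    (hT : 0 < T) (hσ : 0 < σ)
    (u : ℝ → ℝ → ℝ)
    (htime : ∀ x ∈ Set.Icc (b - σ) (b + σ), ∀ t' t'' : ℝ,
      0 ≤ t' → t' ≤ t'' → t'' ≤ T → u x t' - u x t'' ≤ N₂ * (t'' - t'))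
    (htrans : ∀ x₁ x₂ t, b - σ ≤ x₁ → x₁ ≤ x₂ → x₂ ≤ b + σ → t ∈ Set.Icc (0:ℝ) T →
      m / 4 * (x₂ - x₁) ≤ u x₂ t - u x₁ t) :
    ∀ tstar tstarstar : ℝ, tstar ∈ Set.Icc (0:ℝ) T → tstarstar ∈ Set.Icc (0:ℝ) T →
      tstar ≤ tstarstar →
      ∀ s₁ s₂ : ℝ, s₁ ∈ Set.Icc (b - σ) (b + σ) → s₂ ∈ Set.Icc (b - σ) (b + σ) →
        s₁ ≤ s₂ → u s₁ tstar = α → u s₂ tstarstar = α →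
        0 ≤ s₂ - s₁ ∧ s₂ - s₁ ≤ 4 * N₂ / m * (tstarstar - tstar) := by
  intro t1 t2 ht1 ht2 ht12 s₁ s₂ hs₁ hs₂ hs h1 h2
  refine ⟨by linarith, ?_⟩
  have hA := htrans s₁ s₂ t1 hs₁.1 hs hs₂.2 ht1
  have hB := htime s₂ hs₂ t1 t2 ht1.1 ht12 ht2.2
  -- m/4*(s₂-s₁) ≤ u s₂ t1 - α ≤ N₂*(t2-t1)
  have key : m / 4 * (s₂ - s₁) ≤ N₂ * (t2 - t1) := by
    have : u s₂ t1 - u s₂ t2 = u s₂ t1 - α := by rw [h2]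
    linarith
  rw [div_mul_eq_mul_div, le_div_iff₀ hm0]
  nlinarith
end
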